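/- A function G: Γ × Γ → ℂ is the 2D-Fock transform of some continuous linear operator T: S → S* (i.e., G(σ,τ) = ⟨⟨T Z_σ, Z_τ⟩⟩ for all σ,τ) if and only if there exist constants C ≥ 0 and p ≥ 0 such that |G(σ,τ)| ≤ C λ_σ^p λ_τ^p for all σ, τ ∈ Γ; moreover such T is unique. -/

import Mathlib

open scoped BigOperators

/-- `lam σ = ∏_{k∈σ} (1+k)`. -/
noncomputable def lam (σ : Finset ℕ) : ℝ := ∏ k ∈ σ, (1 + k : ℝ)

/-- The `S_q`-norm of a finitely supported test functional `ξ = ∑_σ ξ_σ Z_σ`. -/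
noncomputable def normq (q : ℝ) (ξ : Finset ℕ →₀ ℂ) : ℝ :=
  Real.sqrt (∑ σ ∈ ξ.support, lam σ ^ (2 * q) * ‖ξ σ‖ ^ 2)

/-!
On a basis vector `‖Z_σ‖_q = λ_σ^q`, so a bound `|B(ξ,η)| ≤ M ‖ξ‖_q ‖η‖_q` restricts to the kernel
bound with `C = M`, `p = q`. Conversely, extend `G` bilinearly. Since `λ_σ^{p+2} |ξ_σ| ≤ ‖ξ‖_{p+2}`
and `∑_σ λ_σ^{-2} = ∏_k (1 + (1+k)^{-2}) ≤ e^{∑_k (1+k)^{-2}} ≤ e²`, the weighted `ℓ¹`-sum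
`∑_σ |ξ_σ| λ_σ^p` is at most `e² ‖ξ‖_{p+2}`, which gives `M = C e⁴` and `q = p + 2`.
Uniqueness holds because the `Z_σ` form a basis.
-/

open Finset

lemma one_le_lam (σ : Finset ℕ) : 1 ≤ lam σ :=
  one_le_prod fun k _ => le_add_of_nonneg_right k.cast_nonneg

lemma lam_pos (σ : Finset ℕ) : 0 < lam σ := one_pos.trans_le (one_le_lam σ)

lemma lam_rpow_two_mul (σ : Finset ℕ) (q : ℝ) : lam σ ^ (2 * q) = (lam σ ^ q) ^ 2 := by
  rw [mul_comm, Real.rpow_mul (lam_pos σ).le, Real.rpow_two]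

lemma normq_nonneg (q : ℝ) (ξ : Finset ℕ →₀ ℂ) : 0 ≤ normq q ξ := Real.sqrt_nonneg _

lemma normq_single_one (q : ℝ) (σ : Finset ℕ) :
    normq q (Finsupp.single σ (1 : ℂ)) = lam σ ^ q := by
  rw [normq, Finsupp.support_single _ one_ne_zero, sum_singleton,
    Finsupp.single_eq_same, norm_one, one_pow, mul_one, lam_rpow_two_mul,
    Real.sqrt_sq (Real.rpow_nonneg (lam_pos σ).le q)]

lemma lam_rpow_mul_norm_le_normq (q : ℝ) (ξ : Finset ℕ →₀ ℂ) (σ : Finset ℕ) :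
    lam σ ^ q * ‖ξ σ‖ ≤ normq q ξ := by
  by_cases hσ : ξ σ = 0
  · simp [hσ, normq_nonneg]
  have hterm : (lam σ ^ q * ‖ξ σ‖) ^ 2 ≤ ∑ τ ∈ ξ.support, lam τ ^ (2 * q) * ‖ξ τ‖ ^ 2 := by
    rw [mul_pow, ← lam_rpow_two_mul]
    exact single_le_sum (f := fun τ => lam τ ^ (2 * q) * ‖ξ τ‖ ^ 2)
      (fun τ _ => by have := (lam_pos τ).le; positivity) (Finsupp.mem_support_iff.2 hσ)
  exact Real.le_sqrt_of_sq_le hterm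

lemma sum_range_inv_one_add_sq_le_two (N : ℕ) :
    ∑ k ∈ range N, (((1 : ℝ) + k) ^ 2)⁻¹ ≤ 2 := by
  have h := sum_Ioo_inv_sq_le (α := ℝ) 0 (N + 1)
  rw [← Ico_add_one_left_eq_Ioo, sum_Ico_eq_sum_range] at h
  simpa using h

lemma sum_inv_lam_sq_le_exp_two (s : Finset (Finset ℕ)) :
    ∑ σ ∈ s, (lam σ ^ 2)⁻¹ ≤ Real.exp 2 := by
  set N := s.sup (fun σ => σ.sup id) + 1
  have hsub : s ⊆ (range N).powerset := fun σ hσ => mem_powerset.2 <|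
    (subset_range_sup_succ σ).trans <|
      range_subset_range.2 (Nat.succ_le_succ (le_sup (f := fun σ => σ.sup id) hσ))
  have hprod : ∑ σ ∈ (range N).powerset, (lam σ ^ 2)⁻¹
      = ∏ k ∈ range N, ((((1 : ℝ) + k) ^ 2)⁻¹ + 1) := by
    rw [prod_add]
    refine sum_congr rfl fun σ _ => ?_
    rw [prod_const_one, mul_one, lam, ← prod_pow, ← prod_inv_distrib]
  calc ∑ σ ∈ s, (lam σ ^ 2)⁻¹
      ≤ ∑ σ ∈ (range N).powerset, (lam σ ^ 2)⁻¹ :=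
        sum_le_sum_of_subset_of_nonneg hsub fun σ _ _ => by positivity
    _ = ∏ k ∈ range N, ((((1 : ℝ) + k) ^ 2)⁻¹ + 1) := hprod
    _ ≤ ∏ k ∈ range N, Real.exp (((1 : ℝ) + k) ^ 2)⁻¹ :=
        prod_le_prod (fun k _ => by positivity) fun k _ => Real.add_one_le_exp _
    _ = Real.exp (∑ k ∈ range N, (((1 : ℝ) + k) ^ 2)⁻¹) := (Real.exp_sum _ _).symm
    _ ≤ Real.exp 2 := Real.exp_le_exp.2 (sum_range_inv_one_add_sq_le_two N)

lemma sum_norm_mul_lam_rpow_le (p : ℝ) (ξ : Finset ℕ →₀ ℂ) :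
    ∑ σ ∈ ξ.support, ‖ξ σ‖ * lam σ ^ p ≤ Real.exp 2 * normq (p + 2) ξ := by
  have hterm : ∀ σ, ‖ξ σ‖ * lam σ ^ p ≤ (lam σ ^ 2)⁻¹ * normq (p + 2) ξ := fun σ => by
    have hsplit : ‖ξ σ‖ * lam σ ^ p = (lam σ ^ 2)⁻¹ * (lam σ ^ (p + 2) * ‖ξ σ‖) := by
      rw [Real.rpow_add (lam_pos σ), Real.rpow_two]
      field_simp [(lam_pos σ).ne']
    rw [hsplit]
    exact mul_le_mul_of_nonneg_left (lam_rpow_mul_norm_le_normq _ ξ σ) (by positivity)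
  calc ∑ σ ∈ ξ.support, ‖ξ σ‖ * lam σ ^ p
      ≤ (∑ σ ∈ ξ.support, (lam σ ^ 2)⁻¹) * normq (p + 2) ξ := by
        rw [sum_mul]; exact sum_le_sum fun σ _ => hterm σ
    _ ≤ Real.exp 2 * normq (p + 2) ξ :=
        mul_le_mul_of_nonneg_right (sum_inv_lam_sq_le_exp_two _) (normq_nonneg _ _)

noncomputable def kernelForm (G : Finset ℕ → Finset ℕ → ℂ) :
    (Finset ℕ →₀ ℂ) →ₗ[ℂ] (Finset ℕ →₀ ℂ) →ₗ[ℂ] ℂ :=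
  Finsupp.linearCombination ℂ fun σ => Finsupp.linearCombination ℂ (G σ)

lemma kernelForm_single_one (G : Finset ℕ → Finset ℕ → ℂ) (σ τ : Finset ℕ) :
    kernelForm G (Finsupp.single σ 1) (Finsupp.single τ 1) = G σ τ := by
  simp [kernelForm, Finsupp.linearCombination_single]

lemma kernelForm_apply (G : Finset ℕ → Finset ℕ → ℂ) (ξ η : Finset ℕ →₀ ℂ) :
    kernelForm G ξ η = ∑ σ ∈ ξ.support, ∑ τ ∈ η.support, ξ σ * η τ * G σ τ := by
  simp only [kernelForm, Finsupp.linearCombination_apply, Finsupp.sum, LinearMap.coe_sum,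
    Finset.sum_apply, LinearMap.smul_apply, smul_eq_mul, mul_sum]
  exact sum_congr rfl fun σ _ => sum_congr rfl fun τ _ => by ring

lemma norm_kernelForm_le {G : Finset ℕ → Finset ℕ → ℂ} {C p : ℝ} (hC : 0 ≤ C)
    (hG : ∀ σ τ, ‖G σ τ‖ ≤ C * lam σ ^ p * lam τ ^ p) (ξ η : Finset ℕ →₀ ℂ) :
    ‖kernelForm G ξ η‖ ≤ C * Real.exp 2 * Real.exp 2 * normq (p + 2) ξ * normq (p + 2) η := by
  calc ‖kernelForm G ξ η‖
      ≤ ∑ σ ∈ ξ.support, ∑ τ ∈ η.support, ‖ξ σ‖ * ‖η τ‖ * ‖G σ τ‖ := by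
        rw [kernelForm_apply]
        refine (norm_sum_le _ _).trans (sum_le_sum fun σ _ => ?_)
        refine (norm_sum_le _ _).trans (sum_le_sum fun τ _ => ?_)
        rw [norm_mul, norm_mul]
    _ ≤ ∑ σ ∈ ξ.support, ∑ τ ∈ η.support, ‖ξ σ‖ * ‖η τ‖ * (C * lam σ ^ p * lam τ ^ p) :=
        sum_le_sum fun σ _ => sum_le_sum fun τ _ =>
          mul_le_mul_of_nonneg_left (hG σ τ) (by positivity)
    _ = C * (∑ σ ∈ ξ.support, ‖ξ σ‖ * lam σ ^ p) * (∑ τ ∈ η.support, ‖η τ‖ * lam τ ^ p) := by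
        rw [mul_assoc, sum_mul_sum, mul_sum]
        exact sum_congr rfl fun σ _ => by
          rw [mul_sum]; exact sum_congr rfl fun τ _ => by ring
    _ ≤ C * (Real.exp 2 * normq (p + 2) ξ) * (Real.exp 2 * normq (p + 2) η) := by
        have := normq_nonneg (p + 2) ξ
        exact mul_le_mul (mul_le_mul_of_nonneg_left (sum_norm_mul_lam_rpow_le p ξ) hC)
          (sum_norm_mul_lam_rpow_le p η)
          (sum_nonneg fun τ _ => by have := (lam_pos τ).le; positivity) (by positivity)
    _ = C * Real.exp 2 * Real.exp 2 * normq (p + 2) ξ * normq (p + 2) η := by ring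

lemma norm_apply_single_one_le {B : (Finset ℕ →₀ ℂ) →ₗ[ℂ] (Finset ℕ →₀ ℂ) →ₗ[ℂ] ℂ} {M q : ℝ}
    (hB : ∀ ξ η, ‖B ξ η‖ ≤ M * normq q ξ * normq q η) (σ τ : Finset ℕ) :
    ‖B (Finsupp.single σ 1) (Finsupp.single τ 1)‖ ≤ M * lam σ ^ q * lam τ ^ q := by
  simpa only [normq_single_one] using hB (Finsupp.single σ 1) (Finsupp.single τ 1)

/-- **Characterization theorem for operators via the 2D-Fock transform.** A function
`G : Γ × Γ → ℂ` is the 2D-Fock transform `G(σ,τ) = ⟨⟨T Z_σ, Z_τ⟩⟩` of a continuous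
linear operator `T : S → S*` — modeled here as a bilinear form `B(ξ,η) = ⟨⟨Tξ, η⟩⟩` on
the (dense) subspace of finite linear combinations of the `Z_σ`, which is continuous in
the sense that `|B(ξ,η)| ≤ M ‖ξ‖_q ‖η‖_q` for some `M, q ≥ 0` — if and only if
`|G(σ,τ)| ≤ C λ_σ^p λ_τ^p` for some constants `C ≥ 0`, `p ≥ 0`.
Moreover, such an operator is unique. -/
theorem stmt19 (G : Finset ℕ → Finset ℕ → ℂ) :
    ((∃ B : (Finset ℕ →₀ ℂ) →ₗ[ℂ] ((Finset ℕ →₀ ℂ) →ₗ[ℂ] ℂ),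
        (∃ M q : ℝ, 0 ≤ M ∧ 0 ≤ q ∧
          ∀ ξ η : Finset ℕ →₀ ℂ, ‖B ξ η‖ ≤ M * normq q ξ * normq q η) ∧
        ∀ σ τ : Finset ℕ,
          B (Finsupp.single σ (1 : ℂ)) (Finsupp.single τ (1 : ℂ)) = G σ τ) ↔
      (∃ C p : ℝ, 0 ≤ C ∧ 0 ≤ p ∧
        ∀ σ τ : Finset ℕ, ‖G σ τ‖ ≤ C * lam σ ^ p * lam τ ^ p)) ∧
    ∀ B₁ B₂ : (Finset ℕ →₀ ℂ) →ₗ[ℂ] ((Finset ℕ →₀ ℂ) →ₗ[ℂ] ℂ),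
      (∀ σ τ : Finset ℕ,
        B₁ (Finsupp.single σ (1 : ℂ)) (Finsupp.single τ (1 : ℂ)) = G σ τ) →
      (∀ σ τ : Finset ℕ,
        B₂ (Finsupp.single σ (1 : ℂ)) (Finsupp.single τ (1 : ℂ)) = G σ τ) →
      B₁ = B₂ := by
  refine ⟨⟨?_, ?_⟩, fun B₁ B₂ h₁ h₂ => ?_⟩
  · rintro ⟨B, ⟨M, q, hM, hq, hB⟩, hBG⟩
    exact ⟨M, q, hM, hq, fun σ τ => hBG σ τ ▸ norm_apply_single_one_le hB σ τ⟩
  · rintro ⟨C, p, hC, hp, hG⟩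
    exact ⟨kernelForm G, ⟨_, p + 2, by positivity, by linarith, norm_kernelForm_le hC hG⟩,
      kernelForm_single_one G⟩
  · exact LinearMap.ext_basis Finsupp.basisSingleOne Finsupp.basisSingleOne
      fun σ τ => (h₁ σ τ).trans (h₂ σ τ).symm
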